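/- The Al-Salam-Carlitz polynomial has the basic hypergeometric representation: U_n(x,y,a;q) = (-a)^n q^{\binom{n}{2}} \sum_{j=0}^n ((q^{-n};q)_j (y/x;q)_j)/((q;q)_j) \cdot (qx/a)^j, for a ≠ 0, x ≠ 0, q not a root of unity. -/

import Mathlib

/-!
Reverse the order of summation, `k = n - j`, and compare the sums termwise. Writing `n = k + j`,
the `j`-th term is matched using `P_j(x, y) = x^j (y/x; q)_j`, the splitting
`(q; q)_{k+j} = (q; q)_k (q^{k+1}; q)_j` of the `q`-binomial coefficient, and the reversal
`(q^{-n}; q)_j = (-q^{-n})^j q^{C(j,2)} (q^{k+1}; q)_j`. The powers of `q` then agree because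
`C(k+j, 2) + C(j, 2) + j = C(k, 2) + (k + j) j`.
-/

open Finset

noncomputable def qPoch (q a : ℂ) (n : ℕ) : ℂ := ∏ j ∈ Finset.range n, (1 - a * q ^ j)

noncomputable def qPochInf (q a : ℂ) : ℂ := ∏' j : ℕ, (1 - a * q ^ j)

noncomputable def qBinom (q : ℂ) (n k : ℕ) : ℂ := qPoch q q n / (qPoch q q (n - k) * qPoch q q k)

noncomputable def cauchyP (q x y : ℂ) (n : ℕ) : ℂ := ∏ j ∈ Finset.range n, (x - q ^ j * y)

noncomputable def ascU (q x y a : ℂ) (n : ℕ) : ℂ :=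
  ∑ k ∈ Finset.range (n + 1), qBinom q n k * (-1) ^ k * q ^ Nat.choose k 2 * a ^ k * cauchyP q x y (n - k)

lemma choose_two_add_add_choose_two_add_self (k j : ℕ) :
    (k + j).choose 2 + j.choose 2 + j = k.choose 2 + (k + j) * j := by
  induction j with
  | zero => simp
  | succ j ih =>
    rw [← add_assoc k j 1, Nat.choose_succ_succ' (k + j), Nat.choose_succ_succ' j,
      Nat.choose_one_right, Nat.choose_one_right]
    nlinarith [ih]

lemma pow_mul_pow_choose_two_add {M : Type*} [CommMonoid M] {q t : M} {k j : ℕ}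
    (ht : t * q ^ (k + j) = 1) :
    t ^ j * (q ^ (k + j).choose 2 * q ^ j.choose 2 * q ^ j) = q ^ k.choose 2 := by
  rw [← pow_add, ← pow_add, choose_two_add_add_choose_two_add_self, pow_add, pow_mul,
    mul_left_comm, ← mul_pow, ht, one_pow, mul_one]

lemma prod_range_neg_mul_pow {R : Type*} [CommRing R] (q a : R) (j : ℕ) :
    ∏ i ∈ range j, (-a * q ^ i) = (-a) ^ j * q ^ j.choose 2 := by
  rw [prod_mul_distrib, prod_const, card_range, prod_pow_eq_pow_sum, sum_range_id,
    Nat.choose_two_right]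

lemma qPoch_add (q a : ℂ) (m j : ℕ) :
    qPoch q a (m + j) = qPoch q a m * qPoch q (a * q ^ m) j := by
  simp only [qPoch, prod_range_add, pow_add, mul_assoc]

lemma qPoch_self_ne_zero {q : ℂ} (hroot : ∀ m : ℕ, 0 < m → q ^ m ≠ 1) (n : ℕ) :
    qPoch q q n ≠ 0 :=
  prod_ne_zero_iff.mpr fun i _ h ↦
    hroot (i + 1) i.succ_pos (by linear_combination pow_succ' q i - h)

/-- Pair the factor `1 - a q^i` with `1 - b q^(j-1-i)`: when `a b q^(j-1) = 1` they differ by the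
factor `-a q^i`. -/
lemma qPoch_eq_neg_pow_mul_qPoch {q a b : ℂ} {j : ℕ} (hq : q ≠ 0) (h : a * b * q ^ j = q) :
    qPoch q a j = (-a) ^ j * q ^ j.choose 2 * qPoch q b j := by
  have hfactor : ∀ i ∈ range j, -a * q ^ i * (1 - b * q ^ (j - 1 - i)) = 1 - a * q ^ i := by
    intro i hi
    have hj : q ^ j = q ^ i * q ^ (j - 1 - i) * q := by
      rw [← pow_add, ← pow_succ]
      congr 1
      have := mem_range.mp hi
      omega
    have hab : a * b * (q ^ i * q ^ (j - 1 - i)) = 1 :=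
      mul_right_cancel₀ hq (by linear_combination h - a * b * hj)
    linear_combination hab
  calc qPoch q a j = ∏ i ∈ range j, -a * q ^ i * (1 - b * q ^ (j - 1 - i)) :=
        (prod_congr rfl hfactor).symm
    _ = (-a) ^ j * q ^ j.choose 2 * qPoch q b j := by
      rw [prod_mul_distrib, prod_range_neg_mul_pow, prod_range_reflect (fun i ↦ 1 - b * q ^ i)]
      rfl

lemma qBinom_add_left {q : ℂ} (hroot : ∀ m : ℕ, 0 < m → q ^ m ≠ 1) (k j : ℕ) :
    qBinom q (k + j) k = qPoch q (q ^ (k + 1)) j / qPoch q q j := by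
  rw [qBinom, Nat.add_sub_cancel_left, qPoch_add, ← pow_succ']
  field_simp [qPoch_self_ne_zero hroot]

lemma cauchyP_eq_pow_mul_qPoch (q y : ℂ) {x : ℂ} (hx : x ≠ 0) (n : ℕ) :
    cauchyP q x y n = x ^ n * qPoch q (y / x) n := by
  rw [cauchyP, qPoch, ← card_range n, ← prod_const, card_range, ← prod_mul_distrib]
  refine prod_congr rfl fun i _ ↦ ?_
  field_simp

lemma ascU_term_eq {q x y a : ℂ} (hq : q ≠ 0) (hroot : ∀ m : ℕ, 0 < m → q ^ m ≠ 1)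
    (hx : x ≠ 0) (ha : a ≠ 0) (k j : ℕ) :
    qBinom q (k + j) k * (-1) ^ k * q ^ k.choose 2 * a ^ k * cauchyP q x y j =
      (-a) ^ (k + j) * q ^ (k + j).choose 2 *
        (qPoch q (q ^ (-((k + j : ℕ) : ℤ))) j * qPoch q (y / x) j / qPoch q q j *
          (q * x / a) ^ j) := by
  have ht : q ^ (-((k + j : ℕ) : ℤ)) * q ^ (k + j) = 1 := by
    rw [← zpow_natCast, ← zpow_add₀ hq, neg_add_cancel, zpow_zero]
  generalize q ^ (-((k + j : ℕ) : ℤ)) = t at ht ⊢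
  rw [qBinom_add_left hroot, cauchyP_eq_pow_mul_qPoch q y hx,
    qPoch_eq_neg_pow_mul_qPoch (a := t) (b := q ^ (k + 1)) hq (by linear_combination q * ht)]
  have hfac : -a * -t * (q * x / a) = t * q * x := by field_simp
  symm
  calc (-a) ^ (k + j) * q ^ (k + j).choose 2 *
        ((-t) ^ j * q ^ j.choose 2 * qPoch q (q ^ (k + 1)) j * qPoch q (y / x) j / qPoch q q j *
          (q * x / a) ^ j)
      = (-a) ^ k * (-a * -t * (q * x / a)) ^ j * q ^ (k + j).choose 2 * q ^ j.choose 2 *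
          qPoch q (q ^ (k + 1)) j * qPoch q (y / x) j / qPoch q q j := by
        -- with `-a`, `-t` atomic, `ring` need not simplify `(-1) ^ (j * 2)`, which it cannot
        generalize -a = b; generalize -t = s; ring
    _ = _ := by
      rw [hfac, mul_pow, mul_pow, neg_pow, ← pow_mul_pow_choose_two_add ht]
      ring

theorem stmt17 (q x y a : ℂ) (hq : q ≠ 0) (hroot : ∀ m : ℕ, 0 < m → q ^ m ≠ 1)
    (hx : x ≠ 0) (ha : a ≠ 0) (n : ℕ) :
    ascU q x y a n =
      (-a) ^ n * q ^ Nat.choose n 2 *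
        ∑ j ∈ Finset.range (n + 1), qPoch q (q ^ (-(n : ℤ))) j * qPoch q (y / x) j /
          qPoch q q j * (q * x / a) ^ j := by
  rw [ascU, ← sum_range_reflect, mul_sum]
  refine sum_congr rfl fun j hj ↦ ?_
  obtain ⟨k, rfl⟩ : ∃ k, n = k + j := ⟨n - j, by have := mem_range.mp hj; omega⟩
  simp only [Nat.add_sub_cancel, Nat.add_sub_cancel_left]
  exact ascU_term_eq hq hroot hx ha k j
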